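/- arXiv:1606.01564 — 5 statements merged into one kernel-verified Lean document; each statement's English description precedes it below -/
import Mathlib

section
/- Let b > 0, let V : ℝ → ℝ be continuous on [0, b], let z ∈ ℂ with Im z > 0, and let u : ℝ → ℂ be twice continuously differentiable on [0, b] with u''(t) = (V(t) − z)·u(t) for all t ∈ [0, b], u(0) = 1, u'(0) = 0. Then |u(b) + i·u'(b)|² − |u(b) − i·u'(b)|² = 4·(Im z)·∫₀ᵇ |u(t)|² dt, and this quantity is strictly positive. -/
/-! Along a solution of `u'' = (V − z) u` with real `V`, the derivative of `Im (conj u · u')` is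
`Im (|u'|² + (V − z) |u|²) = −Im z · |u|²`. Since `Im (conj u · u')` vanishes at `0`, its value at
`b` is `−Im z ∫₀ᵇ |u|²`, while the left-hand side equals `−4 Im (conj u(b) · u'(b))`. The integral
is positive because `|u(0)| = 1`. -/

open Complex ComplexConjugate Set

lemma norm_add_I_mul_sq_sub_norm_sub_I_mul_sq (a c : ℂ) :
    ‖a + I * c‖ ^ 2 - ‖a - I * c‖ ^ 2 = -4 * (conj a * c).im := by
  simp only [Complex.sq_norm, normSq_apply, add_re, add_im, sub_re, sub_im, mul_re, mul_im, I_re,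
    I_im, conj_re, conj_im]
  ring

lemma hasDerivAt_im_conj_mul_of_schroedinger {u u' : ℝ → ℂ} {q : ℝ} {z : ℂ} {t : ℝ}
    (hu : HasDerivAt u (u' t) t) (hu' : HasDerivAt u' ((q - z) * u t) t) :
    HasDerivAt (fun s => (conj (u s) * u' s).im) (-z.im * ‖u t‖ ^ 2) t := by
  have hprod : HasDerivAt (fun s => conj (u s) * u' s)
      (conj (u' t) * u' t + conj (u t) * ((q - z) * u t)) t := hu.star.mul hu'
  refine (imCLM.hasFDerivAt.comp_hasDerivAt t hprod).congr_deriv ?_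
  have hnormSq : ∀ w : ℂ, conj w * w = ((‖w‖ ^ 2 : ℝ) : ℂ) := fun w => by
    rw [conj_mul', ofReal_pow]
  simp only [imCLM_apply, mul_left_comm (conj (u t)), hnormSq, add_im, ofReal_im, mul_im, sub_re,
    sub_im, ofReal_re]
  ring

theorem im_conj_mul_sub_eq_integral_of_schroedinger {u u' : ℝ → ℂ} {V : ℝ → ℝ} {z : ℂ}
    {a b : ℝ} (hu : ∀ t ∈ uIcc a b, HasDerivAt u (u' t) t)
    (hu' : ∀ t ∈ uIcc a b, HasDerivAt u' ((V t - z) * u t) t) :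
    (conj (u b) * u' b).im - (conj (u a) * u' a).im = -z.im * ∫ t in a..b, ‖u t‖ ^ 2 := by
  have hcont : ContinuousOn (fun t => -z.im * ‖u t‖ ^ 2) (uIcc a b) :=
    continuousOn_const.mul ((HasDerivAt.continuousOn hu).norm.pow 2)
  rw [← intervalIntegral.integral_const_mul]
  exact (intervalIntegral.integral_eq_sub_of_hasDerivAt
    (fun t ht => hasDerivAt_im_conj_mul_of_schroedinger (hu t ht) (hu' t ht))
    hcont.intervalIntegrable).symm

theorem schroedinger_deBranges_positivity_general (b : ℝ) (hb : 0 < b) (V : ℝ → ℝ)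
    (z : ℂ) (hz : 0 < z.im)
    (u u' u'' : ℝ → ℂ)
    (hu1 : ∀ t ∈ Set.Icc (0 : ℝ) b, HasDerivAt u (u' t) t)
    (hu2 : ∀ t ∈ Set.Icc (0 : ℝ) b, HasDerivAt u' (u'' t) t)
    (hueq : ∀ t ∈ Set.Icc (0 : ℝ) b, u'' t = ((V t : ℂ) - z) * u t)
    (hu0 : u 0 = 1) (hu'0 : u' 0 = 0) :
    (‖u b + Complex.I * u' b‖) ^ 2
        - (‖u b - Complex.I * u' b‖) ^ 2
      = 4 * z.im * ∫ t in (0 : ℝ)..b, (‖u t‖) ^ 2 ∧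
    0 < (‖u b + Complex.I * u' b‖) ^ 2
        - (‖u b - Complex.I * u' b‖) ^ 2 := by
  have hcont : ContinuousOn (fun t => ‖u t‖ ^ 2) (Icc 0 b) :=
    (HasDerivAt.continuousOn hu1).norm.pow 2
  have hpos : 0 < ∫ t in (0 : ℝ)..b, ‖u t‖ ^ 2 :=
    intervalIntegral.integral_pos hb hcont (fun _ _ => by positivity)
      ⟨0, left_mem_Icc.2 hb.le, by simp [hu0]⟩
  rw [← uIcc_of_le hb.le] at hu1 hu2 hueq
  have hlagrange := im_conj_mul_sub_eq_integral_of_schroedinger hu1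
    (fun t ht => hueq t ht ▸ hu2 t ht)
  rw [hu0, hu'0, mul_zero, zero_im, sub_zero] at hlagrange
  rw [norm_add_I_mul_sq_sub_norm_sub_I_mul_sq, hlagrange]
  exact ⟨by ring, by linarith [mul_pos hz hpos]⟩

/-- For a solution of `u'' = (V − z)u` on `[0, b]` with `u(0) = 1`, `u'(0) = 0` and
`Im z > 0`: `|u(b) + iu'(b)|² − |u(b) − iu'(b)|² = 4·(Im z)·∫₀ᵇ |u(t)|² dt > 0`. -/
theorem schroedinger_deBranges_positivity (b : ℝ) (hb : 0 < b) (V : ℝ → ℝ)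
    (hV : ContinuousOn V (Set.Icc 0 b)) (z : ℂ) (hz : 0 < z.im)
    (u u' u'' : ℝ → ℂ)
    (hu1 : ∀ t ∈ Set.Icc (0 : ℝ) b, HasDerivAt u (u' t) t)
    (hu2 : ∀ t ∈ Set.Icc (0 : ℝ) b, HasDerivAt u' (u'' t) t)
    (hu3 : ContinuousOn u'' (Set.Icc 0 b))
    (hueq : ∀ t ∈ Set.Icc (0 : ℝ) b, u'' t = ((V t : ℂ) - z) * u t)
    (hu0 : u 0 = 1) (hu'0 : u' 0 = 0) :
    (‖u b + Complex.I * u' b‖) ^ 2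
        - (‖u b - Complex.I * u' b‖) ^ 2
      = 4 * z.im * ∫ t in (0 : ℝ)..b, (‖u t‖) ^ 2 ∧
    0 < (‖u b + Complex.I * u' b‖) ^ 2
        - (‖u b - Complex.I * u' b‖) ^ 2 :=
  schroedinger_deBranges_positivity_general b hb V z hz u u' u'' hu1 hu2 hueq hu0 hu'0
end

section
/- Let b > 0, let V : ℝ → ℝ be continuous on [0, b], let z, w ∈ ℂ with z ≠ conj(w), and let u, v : ℝ → ℂ be twice continuously differentiable on [0, b] with u''(t) = (V(t) − z)·u(t) and v''(t) = (V(t) − w)·v(t) for all t ∈ [0, b], and u(0) = v(0) = 1, u'(0) = v'(0) = 0. Then ((u(b) + i·u'(b))·conj(v(b) + i·v'(b)) − (u(b) − i·u'(b))·conj(v(b) − i·v'(b))) / (−2i·(z − conj(w))) = ∫₀ᵇ u(t)·conj(v(t)) dt. -/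
/-!
Since `V` is real, the conjugate Wronskian `W = u·conj v' − u'·conj v` of the two solutions has
derivative `(z − conj w)·u·conj v`, so `(z − conj w)·∫₀ᵇ u·conj v = W(b) − W(0)`, and `W(0) = 0`
by the Neumann data `u'(0) = v'(0) = 0`. Expanding the kernel numerator shows that it equals
`−2i·W(b)`.
-/

open Set ComplexConjugate

noncomputable def conjWronskian (u u' v v' : ℝ → ℂ) (t : ℝ) : ℂ :=
  u t * conj (v' t) - u' t * conj (v t)

theorem hasDerivAt_conjWronskian {u u' u'' v v' v'' : ℝ → ℂ} {t : ℝ}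
    (hu : HasDerivAt u (u' t) t) (hu' : HasDerivAt u' (u'' t) t)
    (hv : HasDerivAt v (v' t) t) (hv' : HasDerivAt v' (v'' t) t) :
    HasDerivAt (conjWronskian u u' v v') (u t * conj (v'' t) - u'' t * conj (v t)) t := by
  refine ((hu.mul hv'.star).sub (hu'.mul hv.star)).congr_deriv ?_
  simp only [Complex.star_def]
  ring

theorem mul_integral_mul_conj_eq_conjWronskian_sub {V : ℝ → ℝ} {z w : ℂ} {a b : ℝ}
    {u u' u'' v v' v'' : ℝ → ℂ} (hab : a ≤ b)
    (hu : ∀ t ∈ Icc a b, HasDerivAt u (u' t) t) (hu' : ∀ t ∈ Icc a b, HasDerivAt u' (u'' t) t)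
    (hv : ∀ t ∈ Icc a b, HasDerivAt v (v' t) t) (hv' : ∀ t ∈ Icc a b, HasDerivAt v' (v'' t) t)
    (hu'' : ∀ t ∈ Icc a b, u'' t = (V t - z) * u t)
    (hv'' : ∀ t ∈ Icc a b, v'' t = (V t - w) * v t) :
    (z - conj w) * ∫ t in a..b, u t * conj (v t)
      = conjWronskian u u' v v' b - conjWronskian u u' v v' a := by
  have hderiv : ∀ t ∈ uIcc a b,
      HasDerivAt (conjWronskian u u' v v') ((z - conj w) * (u t * conj (v t))) t := by
    rw [uIcc_of_le hab]
    intro t ht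
    convert hasDerivAt_conjWronskian (hu t ht) (hu' t ht) (hv t ht) (hv' t ht) using 1
    rw [hu'' t ht, hv'' t ht, map_mul, map_sub, Complex.conj_ofReal]
    ring
  have hcont : ContinuousOn (fun t => u t * conj (v t)) (Icc a b) := fun t ht =>
    ((hu t ht).continuousAt.mul (hv t ht).continuousAt.star).continuousWithinAt
  rw [← intervalIntegral.integral_const_mul]
  exact intervalIntegral.integral_eq_sub_of_hasDerivAt hderiv
    ((continuousOn_const.mul hcont).intervalIntegrable_of_Icc hab)

theorem schroedinger_kernel_formula_general (b : ℝ) (hb : 0 < b) (V : ℝ → ℝ)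
    (z w : ℂ) (hzw : z ≠ (starRingEnd ℂ) w)
    (u v u' v' u'' v'' : ℝ → ℂ)
    (hu1 : ∀ t ∈ Set.Icc (0 : ℝ) b, HasDerivAt u (u' t) t)
    (hu2 : ∀ t ∈ Set.Icc (0 : ℝ) b, HasDerivAt u' (u'' t) t)
    (hv1 : ∀ t ∈ Set.Icc (0 : ℝ) b, HasDerivAt v (v' t) t)
    (hv2 : ∀ t ∈ Set.Icc (0 : ℝ) b, HasDerivAt v' (v'' t) t)
    (hueq : ∀ t ∈ Set.Icc (0 : ℝ) b, u'' t = ((V t : ℂ) - z) * u t)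
    (hveq : ∀ t ∈ Set.Icc (0 : ℝ) b, v'' t = ((V t : ℂ) - w) * v t)
    (hu'0 : u' 0 = 0) (hv'0 : v' 0 = 0) :
    ((u b + Complex.I * u' b) * (starRingEnd ℂ) (v b + Complex.I * v' b)
        - (u b - Complex.I * u' b) * (starRingEnd ℂ) (v b - Complex.I * v' b))
      / (-2 * Complex.I * (z - (starRingEnd ℂ) w))
      = ∫ t in (0 : ℝ)..b, u t * (starRingEnd ℂ) (v t) := by
  have hW := mul_integral_mul_conj_eq_conjWronskian_sub hb.le hu1 hu2 hv1 hv2 hueq hveq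
  have hW0 : conjWronskian u u' v v' 0 = 0 := by simp [conjWronskian, hu'0, hv'0]
  rw [hW0, sub_zero, conjWronskian] at hW
  rw [div_eq_iff (mul_ne_zero (by simp) (sub_ne_zero.2 hzw))]
  simp only [map_add, map_sub, map_mul, Complex.conj_I]
  linear_combination 2 * Complex.I * hW

/-- Christoffel–Darboux-type formula for the reproducing kernel of the de Branges space
associated with the Schrödinger equation: with `E_b(λ) = φ_λ(b) + iφ'_λ(b)`, the kernel
numerator over `−2i(z − conj w)` equals `∫₀ᵇ φ_z(t)·conj(φ_w(t)) dt`. -/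
theorem schroedinger_kernel_formula (b : ℝ) (hb : 0 < b) (V : ℝ → ℝ)
    (hV : ContinuousOn V (Set.Icc 0 b)) (z w : ℂ) (hzw : z ≠ (starRingEnd ℂ) w)
    (u v u' v' u'' v'' : ℝ → ℂ)
    (hu1 : ∀ t ∈ Set.Icc (0 : ℝ) b, HasDerivAt u (u' t) t)
    (hu2 : ∀ t ∈ Set.Icc (0 : ℝ) b, HasDerivAt u' (u'' t) t)
    (hu3 : ContinuousOn u'' (Set.Icc 0 b))
    (hv1 : ∀ t ∈ Set.Icc (0 : ℝ) b, HasDerivAt v (v' t) t)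
    (hv2 : ∀ t ∈ Set.Icc (0 : ℝ) b, HasDerivAt v' (v'' t) t)
    (hv3 : ContinuousOn v'' (Set.Icc 0 b))
    (hueq : ∀ t ∈ Set.Icc (0 : ℝ) b, u'' t = ((V t : ℂ) - z) * u t)
    (hveq : ∀ t ∈ Set.Icc (0 : ℝ) b, v'' t = ((V t : ℂ) - w) * v t)
    (hu0 : u 0 = 1) (hv0 : v 0 = 1) (hu'0 : u' 0 = 0) (hv'0 : v' 0 = 0) :
    ((u b + Complex.I * u' b) * (starRingEnd ℂ) (v b + Complex.I * v' b)
        - (u b - Complex.I * u' b) * (starRingEnd ℂ) (v b - Complex.I * v' b))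
      / (-2 * Complex.I * (z - (starRingEnd ℂ) w))
      = ∫ t in (0 : ℝ)..b, u t * (starRingEnd ℂ) (v t) :=
  schroedinger_kernel_formula_general b hb V z w hzw u v u' v' u'' v'' hu1 hu2 hv1 hv2 hueq hveq
    hu'0 hv'0
end

section
/- Let E be a de Branges function with no zeros on the real axis, let φ : ℝ → ℝ be a continuous function such that E(x)·exp(i·φ(x)) is real for every x ∈ ℝ, and let x₀ ∈ ℝ be a point at which φ is differentiable. Then φ'(x₀) equals the derivative at y = 0 of the function y ↦ log |E(x₀ + iy)|. -/
/-!
Near `x₀` write `E = exp ∘ g` with `g` holomorphic (a branch of `log E`, which exists since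
`E x₀ ≠ 0`). Then `log |E| = Re g`, and the phase condition says `Im g + φ ∈ πℤ` on the real
axis; being continuous at `x₀`, this function is locally constant, so `φ = const - Im g` near
`x₀`. Both sides of the identity are therefore `-Im g'(x₀)`: this is the Cauchy–Riemann
equation `∂_x Im g = -∂_y Re g`.
-/

open Complex Filter Topology

theorem DifferentiableAt.exists_eventuallyEq_exp_comp {f : ℂ → ℂ} {z₀ : ℂ}
    (hf : DifferentiableAt ℂ f z₀) (hf₀ : f z₀ ≠ 0) :
    ∃ g : ℂ → ℂ, DifferentiableAt ℂ g z₀ ∧ f =ᶠ[𝓝 z₀] fun z => Complex.exp (g z) := by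
  -- `f z / f z₀` stays near `1`, inside the slit plane where `Complex.log` is holomorphic.
  have hslit : f z₀ / f z₀ ∈ slitPlane := by rw [div_self hf₀]; exact one_mem_slitPlane
  refine ⟨fun z => Complex.log (f z / f z₀) + Complex.log (f z₀),
    ((hf.div_const _).clog hslit).add_const _, ?_⟩
  filter_upwards [(hf.continuousAt.div_const _).eventually_mem
    (isOpen_slitPlane.mem_nhds hslit)] with z hz
  rw [exp_add, exp_log (slitPlane_ne_zero hz), exp_log hf₀, div_mul_cancel₀ _ hf₀]

theorem Complex.im_exp_mul_exp_I_mul_eq_zero_iff (z : ℂ) (t : ℝ) :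
    (exp z * exp (I * t)).im = 0 ↔ Real.sin (z.im + t) = 0 := by
  rw [← exp_add, exp_im]
  simp [(Real.exp_pos _).ne']

theorem ContinuousAt.eventually_eq_of_sin_eq_zero {ε : ℝ → ℝ} {x₀ : ℝ}
    (hε : ContinuousAt ε x₀) (h : ∀ᶠ x in 𝓝 x₀, Real.sin (ε x) = 0) :
    ∀ᶠ x in 𝓝 x₀, ε x = ε x₀ := by
  obtain ⟨m, hm⟩ := Real.sin_eq_zero_iff.mp h.self_of_nhds
  filter_upwards [h, hε (Metric.ball_mem_nhds _ Real.pi_pos)] with x hx hclose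
  obtain ⟨n, hn⟩ := Real.sin_eq_zero_iff.mp hx
  have hlt : |((n - m : ℤ) : ℝ)| * Real.pi < 1 * Real.pi := by
    rw [Set.mem_preimage, Metric.mem_ball, Real.dist_eq, ← hn, ← hm] at hclose
    push_cast
    rwa [one_mul, ← abs_of_pos Real.pi_pos, ← abs_mul, sub_mul, abs_of_pos Real.pi_pos]
  have hnm : n = m := by
    have := lt_of_mul_lt_mul_right hlt Real.pi_pos.le
    rw [← Int.cast_abs, ← Int.cast_one, Int.cast_lt, Int.abs_lt_one_iff] at this
    omega
  rw [← hn, ← hm, hnm]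

theorem HasDerivAt.im_comp_ofReal {g : ℂ → ℂ} {c : ℂ} {x₀ : ℝ} (hg : HasDerivAt g c x₀) :
    HasDerivAt (fun x : ℝ => (g x).im) c.im x₀ := by
  simpa using ((hg.const_mul (-I)).real_of_complex)

theorem HasDerivAt.re_comp_add_ofReal_mul_I {g : ℂ → ℂ} {c z : ℂ} (hg : HasDerivAt g c z) :
    HasDerivAt (fun y : ℝ => (g (z + y * I)).re) (-c.im) 0 := by
  have hline : HasDerivAt (fun w : ℂ => z + w * I) I ((0 : ℝ) : ℂ) := by
    simpa using ((hasDerivAt_id (0 : ℂ)).mul_const I).const_add z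
  simpa using (hg.comp_of_eq _ hline (by simp)).real_of_complex

theorem phase_derivative_eq_log_modulus_derivative_general (E : ℂ → ℂ) (hE : Differentiable ℂ E)
    (hnz : ∀ x : ℝ, E (x : ℂ) ≠ 0)
    (φ : ℝ → ℝ) (hφ : Continuous φ)
    (hreal : ∀ x : ℝ, (E (x : ℂ) * Complex.exp (Complex.I * (φ x : ℂ))).im = 0)
    (x₀ : ℝ) :
    deriv φ x₀ = deriv (fun y : ℝ => Real.log ‖E (x₀ + y * Complex.I)‖) 0 := by
  obtain ⟨g, hg, hEg⟩ := (hE x₀).exists_eventuallyEq_exp_comp (hnz x₀)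
  have hg' := hg.hasDerivAt
  have hphase : ∀ᶠ x : ℝ in 𝓝 x₀, (g x).im + φ x = (g x₀).im + φ x₀ := by
    have hcont : ContinuousAt (fun x : ℝ => (g x).im + φ x) x₀ :=
      hg'.im_comp_ofReal.continuousAt.add hφ.continuousAt
    refine hcont.eventually_eq_of_sin_eq_zero ?_
    filter_upwards [(continuous_ofReal.tendsto x₀).eventually hEg] with x hx
    rw [← im_exp_mul_exp_I_mul_eq_zero_iff, ← hx, hreal]
  have hvertical : Tendsto (fun y : ℝ => (x₀ : ℂ) + y * I) (𝓝 0) (𝓝 x₀) := by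
    have hcont : Continuous fun y : ℝ => (x₀ : ℂ) + y * I := by fun_prop
    simpa using hcont.tendsto 0
  have hlog : (fun y : ℝ => Real.log ‖E (x₀ + y * I)‖) =ᶠ[𝓝 0] fun y => (g (x₀ + y * I)).re := by
    filter_upwards [hvertical.eventually hEg] with y hy
    rw [hy, norm_exp, Real.log_exp]
  have hφ_eq : φ =ᶠ[𝓝 x₀] fun x => (g x₀).im + φ x₀ - (g x).im := by
    filter_upwards [hphase] with x hx
    linarith
  have hφ_deriv : HasDerivAt (fun x : ℝ => (g x₀).im + φ x₀ - (g x).im) (-(deriv g x₀).im) x₀ :=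
    hg'.im_comp_ofReal.const_sub _
  rw [hφ_eq.deriv_eq, hlog.deriv_eq, hφ_deriv.deriv, hg'.re_comp_add_ofReal_mul_I.deriv]

/-- For a de Branges function `E` with no real zeros and a continuous phase function `φ`
(i.e. `E(x)·exp(iφ(x))` is real for all real `x`), at any point `x₀` of differentiability
of `φ`, `φ'(x₀)` equals the derivative at `y = 0` of `y ↦ log |E(x₀ + iy)|`. -/
theorem phase_derivative_eq_log_modulus_derivative (E : ℂ → ℂ) (hE : Differentiable ℂ E)
    (hdB : ∀ z : ℂ, 0 < z.im →
      ‖(starRingEnd ℂ) (E ((starRingEnd ℂ) z))‖ < ‖E z‖)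
    (hnz : ∀ x : ℝ, E (x : ℂ) ≠ 0)
    (φ : ℝ → ℝ) (hφ : Continuous φ)
    (hreal : ∀ x : ℝ, (E (x : ℂ) * Complex.exp (Complex.I * (φ x : ℂ))).im = 0)
    (x₀ : ℝ) (hdiff : DifferentiableAt ℝ φ x₀) :
    deriv φ x₀ = deriv (fun y : ℝ => Real.log ‖E (x₀ + y * Complex.I)‖) 0 :=
  phase_derivative_eq_log_modulus_derivative_general E hE hnz φ hφ hreal x₀
end

section
/- Let E be a de Branges function with no zeros on the real axis. Then for every real x, the derivative at y = 0 of the function y ↦ |E(x + iy)|² is strictly positive. -/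
/-!
`Θ = E# / E` maps the upper half-plane into the unit disc. Applying the Schwarz–Pick lemma to `Θ`
on the disc of radius `1` about `x + i`, which touches the real axis at `x`, gives
`1 - |Θ(x + iy)|² ≥ c y` for `0 < y < 1` with `c > 0`. Multiplying by `|E(x + iy)|²` yields
`g(y) - g(-y) ≥ c y g(y)` for `g(y) = |E(x + iy)|²`; dividing by `y` and letting `y → 0⁺` gives
`2 g'(0) ≥ c g(0) > 0`, since `E(x) ≠ 0`.
-/

open Complex Metric Set Filter
open scoped Topology ComplexConjugate

theorem HasDerivAt.pos_of_eventually_mul_le_sub_comp_neg {g : ℝ → ℝ} {m c : ℝ}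
    (hg : HasDerivAt g m 0) (hc : 0 < c) (hg0 : 0 < g 0)
    (h : ∀ᶠ y in 𝓝[>] 0, c * y * g y ≤ g y - g (-y)) : 0 < m := by
  have hodd : HasDerivAt (fun y => g y - g (-y)) (2 * m) 0 := by
    have hneg : HasDerivAt (fun y => g (-y)) (m * -1) 0 :=
      HasDerivAt.comp (0 : ℝ) (by rwa [neg_zero]) (hasDerivAt_neg 0)
    exact (hg.sub hneg).congr_deriv (by ring)
  have hslope : Tendsto (fun y => (g y - g (-y)) / y) (𝓝[>] 0) (𝓝 (2 * m)) := by
    have := (hasDerivAt_iff_tendsto_slope.mp hodd).mono_left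
      (nhdsWithin_mono 0 fun y (hy : 0 < y) => hy.ne')
    refine this.congr fun y => ?_
    simp [slope_def_field]
  have hlim : Tendsto (fun y => c * g y) (𝓝[>] 0) (𝓝 (c * g 0)) :=
    (hg.continuousAt.tendsto.mono_left nhdsWithin_le_nhds).const_mul c
  have hle : c * g 0 ≤ 2 * m := le_of_tendsto_of_tendsto hlim hslope <| by
    filter_upwards [h, self_mem_nhdsWithin] with y hy (hy0 : 0 < y)
    rw [le_div_iff₀ hy0]
    linarith
  nlinarith [mul_pos hc hg0]

theorem norm_one_sub_conj_mul_sq_sub_norm_sub_sq (a w : ℂ) :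
    ‖1 - conj a * w‖ ^ 2 - ‖w - a‖ ^ 2 = (1 - ‖a‖ ^ 2) * (1 - ‖w‖ ^ 2) := by
  simp only [Complex.sq_norm, normSq_apply, sub_re, sub_im, mul_re, mul_im, conj_re, conj_im,
    one_re, one_im]
  ring

theorem norm_sub_le_norm_one_sub_conj_mul {a w : ℂ} (ha : ‖a‖ ≤ 1) (hw : ‖w‖ ≤ 1) :
    ‖w - a‖ ≤ ‖1 - conj a * w‖ := by
  have := norm_one_sub_conj_mul_sq_sub_norm_sub_sq a w
  have : 0 ≤ (1 - ‖a‖ ^ 2) * (1 - ‖w‖ ^ 2) := by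
    apply mul_nonneg <;> nlinarith [norm_nonneg a, norm_nonneg w]
  exact pow_le_pow_iff_left₀ (norm_nonneg _) (norm_nonneg _) two_ne_zero |>.mp (by linarith)

/-- Schwarz–Pick: the Schwarz lemma applied to `f` followed by the disc automorphism
`w ↦ (w - f c) / (1 - conj (f c) * w)`. -/
theorem norm_sub_le_mul_norm_one_sub_conj_mul_of_mapsTo_ball {f : ℂ → ℂ} {c z : ℂ} {R : ℝ}
    (hd : DifferentiableOn ℂ f (ball c R)) (hf : MapsTo f (ball c R) (ball 0 1))
    (hz : z ∈ ball c R) :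
    ‖f z - f c‖ ≤ dist z c / R * ‖1 - conj (f c) * f z‖ := by
  set a := f c
  have ha : ‖a‖ < 1 := by simpa using hf (mem_ball_self (pos_of_mem_ball hz))
  have hden : ∀ w ∈ ball c R, 1 - conj a * f w ≠ 0 := fun w hw => by
    have : ‖conj a * f w‖ < 1 := by
      rw [norm_mul, RCLike.norm_conj]
      exact mul_lt_one_of_nonneg_of_lt_one_left (norm_nonneg _) ha
        (mem_ball_zero_iff.mp (hf hw)).le
    intro h0
    rw [← sub_eq_zero.mp h0, norm_one] at this
    exact this.false
  set φ := fun w => (f w - a) / (1 - conj a * f w)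
  have hφc : φ c = 0 := by simp [φ, a]
  have hφd : DifferentiableOn ℂ φ (ball c R) :=
    (hd.sub_const a).div ((hd.const_mul _).const_sub 1) hden
  have hφ : MapsTo φ (ball c R) (closedBall (φ c) 1) := fun w hw => by
    rw [hφc, mem_closedBall_zero_iff, norm_div]
    exact div_le_one_of_le₀
      (norm_sub_le_norm_one_sub_conj_mul ha.le (mem_ball_zero_iff.mp (hf hw)).le) (norm_nonneg _)
  have := Complex.dist_le_div_mul_dist_of_mapsTo_ball hφd hφ hz
  rw [hφc, dist_zero_right, norm_div, div_le_iff₀ (norm_pos_iff.mpr (hden z hz))] at this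
  simpa [div_eq_inv_mul] using this

theorem one_sub_div_one_add_mul_le_one_sub_norm_sq_of_mapsTo_ball {f : ℂ → ℂ} {c z : ℂ} {R : ℝ}
    (hd : DifferentiableOn ℂ f (ball c R)) (hf : MapsTo f (ball c R) (ball 0 1))
    (hz : z ∈ ball c R) :
    (1 - ‖f c‖) / (1 + ‖f c‖) * (1 - (dist z c / R) ^ 2) ≤ 1 - ‖f z‖ ^ 2 := by
  set a := f c
  set r := dist z c / R
  have ha : ‖a‖ < 1 := by simpa using hf (mem_ball_self (pos_of_mem_ball hz))
  have hw : ‖f z‖ < 1 := by simpa using hf hz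
  have hr : r < 1 := (div_lt_one (pos_of_mem_ball hz)).mpr hz
  have hN : ‖f z - a‖ ^ 2 ≤ r ^ 2 * ‖1 - conj a * f z‖ ^ 2 := by
    rw [← mul_pow]
    exact pow_le_pow_left₀ (norm_nonneg _)
      (norm_sub_le_mul_norm_one_sub_conj_mul_of_mapsTo_ball hd hf hz) 2
  have hD : 1 - ‖a‖ ≤ ‖1 - conj a * f z‖ := by
    have : ‖conj a * f z‖ ≤ ‖a‖ := by
      rw [norm_mul, RCLike.norm_conj]
      exact mul_le_of_le_one_right (norm_nonneg _) hw.le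
    have := norm_sub_norm_le 1 (conj a * f z)
    rw [norm_one] at this
    linarith
  have hr2 : 0 ≤ 1 - r ^ 2 := by
    nlinarith [div_nonneg (dist_nonneg (x := z) (y := c)) (pos_of_mem_ball hz).le]
  have hid := norm_one_sub_conj_mul_sq_sub_norm_sub_sq a (f z)
  rw [div_mul_eq_mul_div, div_le_iff₀ (by positivity)]
  refine le_of_mul_le_mul_left ?_ (sub_pos.mpr ha)
  nlinarith [mul_le_mul_of_nonneg_left (pow_le_pow_left₀ (by linarith) hD 2) hr2]

theorem Complex.im_pos_of_mem_ball {c z : ℂ} (hz : z ∈ ball c c.im) : 0 < z.im := by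
  have := (abs_im_le_norm (z - c)).trans_lt (mem_ball_iff_norm.mp hz)
  rw [sub_im] at this
  linarith [neg_abs_le (z.im - c.im)]

section DeBranges

variable {E : ℂ → ℂ}

theorem ne_zero_of_norm_conj_comp_conj_lt
    (hdB : ∀ z : ℂ, 0 < z.im → ‖conj (E (conj z))‖ < ‖E z‖)
    {z : ℂ} (hz : 0 < z.im) : E z ≠ 0 :=
  norm_pos_iff.mp ((norm_nonneg _).trans_lt (hdB z hz))

theorem mapsTo_conj_comp_conj_div_ball
    (hdB : ∀ z : ℂ, 0 < z.im → ‖conj (E (conj z))‖ < ‖E z‖) :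
    MapsTo (fun z => conj (E (conj z)) / E z) {z | 0 < z.im} (ball 0 1) := fun z hz => by
  rw [mem_ball_zero_iff, norm_div, div_lt_one (norm_pos_iff.mpr
    (ne_zero_of_norm_conj_comp_conj_lt hdB hz))]
  exact hdB z hz

theorem differentiableOn_conj_comp_conj_div
    (hdB : ∀ z : ℂ, 0 < z.im → ‖conj (E (conj z))‖ < ‖E z‖)
    (hE : Differentiable ℂ E) :
    DifferentiableOn ℂ (fun z => conj (E (conj z)) / E z) {z | 0 < z.im} :=
  fun z hz => by
    have hsharp : DifferentiableAt ℂ (conj ∘ E ∘ conj) z := by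
      simpa using (hE (conj z)).conj_conj
    exact (hsharp.div (hE z) (ne_zero_of_norm_conj_comp_conj_lt hdB hz)).differentiableWithinAt

theorem exists_pos_mul_le_norm_sq_sub_norm_sq
    (hdB : ∀ z : ℂ, 0 < z.im → ‖conj (E (conj z))‖ < ‖E z‖)
    (hE : Differentiable ℂ E) (x : ℝ) :
    ∃ c > 0, ∀ y ∈ Ioo (0 : ℝ) 1,
      c * y * ‖E (x + y * I)‖ ^ 2 ≤ ‖E (x + y * I)‖ ^ 2 - ‖E (x + (-y : ℝ) * I)‖ ^ 2 := by
  set Θ := fun z => conj (E (conj z)) / E z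
  set w : ℂ := x + I
  have hball : ball w 1 ⊆ {z | 0 < z.im} := fun z hz =>
    im_pos_of_mem_ball (c := w) (by simpa [w] using hz)
  have hΘw : ‖Θ w‖ < 1 :=
    mem_ball_zero_iff.mp (mapsTo_conj_comp_conj_div_ball hdB (by simp [w] : 0 < w.im))
  have hc : 0 < (1 - ‖Θ w‖) / (1 + ‖Θ w‖) := by
    apply div_pos <;> linarith [norm_nonneg (Θ w)]
  refine ⟨_, hc, fun y ⟨hy0, hy1⟩ => ?_⟩
  set z : ℂ := x + y * I
  have hzw : dist z w = 1 - y := by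
    rw [dist_eq_norm, show z - w = ((y - 1 : ℝ) : ℂ) * I by push_cast [z, w]; ring, norm_mul,
      norm_I, mul_one, norm_real, Real.norm_of_nonpos (by linarith)]
    ring
  have hz : z ∈ ball w 1 := by rw [mem_ball, hzw]; linarith
  have hS := one_sub_div_one_add_mul_le_one_sub_norm_sq_of_mapsTo_ball
    ((differentiableOn_conj_comp_conj_div hdB hE).mono hball)
    ((mapsTo_conj_comp_conj_div_ball hdB).mono_left hball) hz
  rw [hzw, div_one] at hS
  have hΘz : ‖Θ z‖ ^ 2 * ‖E z‖ ^ 2 = ‖E (x + (-y : ℝ) * I)‖ ^ 2 := by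
    have hEz := ne_zero_of_norm_conj_comp_conj_lt hdB (z := z) (by simpa [z] using hy0)
    have hconj : conj z = x + (-y : ℝ) * I := by simp [z]
    simp only [Θ, norm_div, RCLike.norm_conj, hconj]
    field_simp
  nlinarith [mul_le_mul_of_nonneg_right hS (sq_nonneg ‖E z‖),
    mul_le_mul_of_nonneg_left (show y ≤ 1 - (1 - y) ^ 2 by nlinarith) hc.le, sq_nonneg ‖E z‖]

end DeBranges

/-- For a de Branges function `E` with no real zeros, the derivative at `y = 0` of
`y ↦ |E(x + iy)|²` is strictly positive for every real `x`. -/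
theorem deBranges_modulus_sq_deriv_pos (E : ℂ → ℂ) (hE : Differentiable ℂ E)
    (hdB : ∀ z : ℂ, 0 < z.im →
      ‖(starRingEnd ℂ) (E ((starRingEnd ℂ) z))‖ < ‖E z‖)
    (hnz : ∀ x : ℝ, E (x : ℂ) ≠ 0) :
    ∀ x : ℝ, 0 < deriv (fun y : ℝ => (‖E (x + y * Complex.I)‖) ^ 2) 0 := by
  intro x
  obtain ⟨c, hc, hineq⟩ := exists_pos_mul_le_norm_sq_sub_norm_sq hdB hE x
  have hdiff : Differentiable ℝ (fun y : ℝ => E (x + y * I)) :=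
    (hE.restrictScalars ℝ).comp ((ofRealCLM.differentiable.mul_const I).const_add _)
  refine HasDerivAt.pos_of_eventually_mul_le_sub_comp_neg (hdiff.norm_sq ℂ 0).hasDerivAt hc
    (by simp [hnz x]) ?_
  filter_upwards [Ioo_mem_nhdsGT one_pos] with y hy using hineq y hy
end

section
/- Let E be a de Branges function of exponential type (i.e., there exist constants C > 0 and τ > 0 with |E(z)| ≤ C·exp(τ·|z|) for all z ∈ ℂ) with no zeros on the real axis. Then the function x ↦ (d/dy |E(x+iy)|² |_{y=0}) / ((1 + x²)·|E(x)|²) is integrable on ℝ. -/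
/-!
Write `E(x) = |E(x)| e^{-iθ(x)}` on the real line. The quantity in question is
`2 θ'(x) / (1 + x²)`, and the de Branges inequality `|E(x - iy)| < |E(x + iy)|` for `y > 0` makes
`θ' ≥ 0`. The entire function `E - E#` is `2i Im E` on the real line, so it vanishes each time `θ`
crosses a multiple of `π`; an entire function of exponential type has `O(r)` zeros in a disc of
radius `r`, hence `θ(R) - θ(-R) = O(R)`. A nonnegative function with linearly growing mass on
`[-R, R]` is integrable against `1 / (1 + x²)`, by a dyadic decomposition.
-/

open MeasureTheory Complex ComplexConjugate Metric
open scoped Real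

theorem hasDerivAt_norm_sq_comp_line {E : ℂ → ℂ} {z : ℂ} (hE : DifferentiableAt ℂ E z) (v : ℂ) :
    HasDerivAt (fun y : ℝ => ‖E (z + y * v)‖ ^ 2) (2 * (conj (E z) * (v * deriv E z)).re) 0 := by
  have hline : HasDerivAt (fun y : ℝ => z + y * v) v 0 := by
    simpa using ((hasDerivAt_id (0 : ℝ)).ofReal_comp.mul_const v).const_add z
  simpa [Complex.inner, mul_comm] using (hE.hasDerivAt.scomp_of_eq 0 hline (by simp)).norm_sq

theorem im_div_eq_im_conj_mul_div_sq_norm (z w : ℂ) : (z / w).im = (conj w * z).im / ‖w‖ ^ 2 := by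
  simp only [div_im, mul_im, conj_re, conj_im, Complex.sq_norm]
  ring

theorem deriv_norm_sq_add_mul_I {E : ℂ → ℂ} {z : ℂ} (hE : DifferentiableAt ℂ E z) :
    deriv (fun y : ℝ => ‖E (z + y * I)‖ ^ 2) 0 = 2 * ‖E z‖ ^ 2 * -(deriv E z / E z).im := by
  rw [(hasDerivAt_norm_sq_comp_line hE I).deriv, im_div_eq_im_conj_mul_div_sq_norm]
  rcases eq_or_ne (E z) 0 with hz | hz
  · simp [hz]
  · have : ‖E z‖ ≠ 0 := norm_ne_zero_iff.mpr hz
    simp only [mul_re, mul_im, I_re, I_im, conj_re, conj_im]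
    field_simp
    ring

theorem im_deriv_div_nonpos_of_deBranges {E : ℂ → ℂ} {x : ℝ} (hE : DifferentiableAt ℂ E x)
    (hdB : ∀ z : ℂ, 0 < z.im → ‖conj (E (conj z))‖ < ‖E z‖) :
    (deriv E x / E x).im ≤ 0 := by
  set g : ℝ → ℝ := fun y => ‖E (x + y * I)‖ ^ 2 - ‖E (x + y * -I)‖ ^ 2
  have hg : HasDerivAt g (-4 * (conj (E x) * deriv E x).im) 0 := by
    refine ((hasDerivAt_norm_sq_comp_line hE I).sub
      (hasDerivAt_norm_sq_comp_line hE (-I))).congr_deriv ?_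
    simp only [mul_re, mul_im, I_re, I_im, neg_re, neg_im, conj_re, conj_im]
    ring
  have hmin : IsLocalMinOn g (Set.Ici 0) 0 := by
    refine IsMinOn.localize fun y (hy : 0 ≤ y) => show g 0 ≤ g y from ?_
    rcases hy.eq_or_lt with rfl | hy
    · exact le_rfl
    have hconj : (x : ℂ) + y * -I = conj (x + y * I) := by simp
    have := hdB (x + y * I) (by simpa using hy)
    rw [norm_conj, ← hconj] at this
    simp only [g, add_zero, sub_self, sub_nonneg, Complex.ofReal_zero, zero_mul]
    exact pow_le_pow_left₀ (norm_nonneg _) this.le 2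
  have hone : (1 : ℝ) ∈ posTangentConeAt (Set.Ici 0) 0 :=
    mem_posTangentConeAt_of_segment_subset (by simp [segment_eq_Icc, Set.Icc_subset_Ici_self])
  have := hmin.hasFDerivWithinAt_nonneg hg.hasDerivWithinAt.hasFDerivWithinAt hone
  rw [ContinuousLinearMap.toSpanSingleton_apply, one_smul] at this
  rw [im_div_eq_im_conj_mul_div_sq_norm]
  exact div_nonpos_of_nonpos_of_nonneg (by linarith) (by positivity)

theorem exists_phase_of_ne_zero {f f' : ℝ → ℂ} (hf : ∀ x, HasDerivAt f (f' x) x)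
    (hf' : Continuous f') (hf0 : ∀ x, f x ≠ 0) :
    ∃ θ : ℝ → ℝ, (∀ x, HasDerivAt θ (-(f' x / f x).im) x) ∧
      ∀ x, f x = ‖f x‖ * exp (-θ x * I) := by
  have hcont : Continuous fun t => f' t / f t :=
    hf'.div (continuous_iff_continuousAt.mpr fun x => (hf x).continuousAt) hf0
  set L : ℝ → ℂ := fun x => ∫ t in (0 : ℝ)..x, f' t / f t
  have hL : ∀ x, HasDerivAt L (f' x / f x) x := fun x =>
    (hcont.integral_hasStrictDerivAt 0 x).hasDerivAt
  have hexpL : ∀ x, f x = f 0 * exp (L x) := by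
    have hderiv : ∀ x, HasDerivAt (fun t => f t * exp (-L t)) 0 x := fun x => by
      refine ((hf x).mul (hL x).neg.cexp).congr_deriv ?_
      field_simp [hf0 x]
      ring
    intro x
    have := is_const_of_deriv_eq_zero (fun t => (hderiv t).differentiableAt)
      (fun t => (hderiv t).deriv) x 0
    simp only [L, intervalIntegral.integral_same, neg_zero, exp_zero, mul_one] at this
    rw [← this, mul_assoc, ← exp_add, neg_add_cancel, exp_zero, mul_one]
  refine ⟨fun x => -(arg (f 0) + (L x).im), fun x => ?_, fun x => ?_⟩
  · have him : HasDerivAt (fun t => (L t).im) (f' x / f x).im x :=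
      imCLM.hasFDerivAt.comp_hasDerivAt x (hL x)
    exact (him.const_add _).neg
  · rw [hexpL x, norm_mul, norm_exp]
    conv_lhs => rw [← norm_mul_exp_arg_mul_I (f 0), ← re_add_im (L x)]
    push_cast
    rw [mul_assoc, ← exp_add, mul_assoc, ← exp_add]
    congr 2
    ring

theorem exists_finset_sin_eq_zero {θ : ℝ → ℝ} {a b : ℝ} (hab : a ≤ b)
    (hθ : ContinuousOn θ (Set.Icc a b)) :
    ∃ S : Finset ℝ, (∀ x ∈ S, x ∈ Set.Icc a b ∧ Real.sin (θ x) = 0) ∧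
      (θ b - θ a) / π - 1 ≤ S.card := by
  set T := Finset.Icc ⌈θ a / π⌉ ⌊θ b / π⌋
  have hpre : ∀ k : ℤ, ∃ x : ℝ, k ∈ T → x ∈ Set.Icc a b ∧ θ x = k * π := by
    intro k
    by_cases hk : k ∈ T
    · rw [Finset.mem_Icc, Int.ceil_le, Int.le_floor, div_le_iff₀ Real.pi_pos,
        le_div_iff₀ Real.pi_pos] at hk
      obtain ⟨x, hx, hθx⟩ := intermediate_value_Icc hab hθ hk
      exact ⟨x, fun _ => ⟨hx, hθx⟩⟩
    · exact ⟨0, fun h => absurd h hk⟩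
  choose g hg using hpre
  have hinj : Set.InjOn g T := fun k hk l hl hkl => by
    have := congrArg θ hkl
    rw [(hg k hk).2, (hg l hl).2] at this
    exact_mod_cast mul_right_cancel₀ Real.pi_ne_zero this
  refine ⟨T.image g, ?_, ?_⟩
  · simp only [Finset.mem_image]
    rintro _ ⟨k, hk, rfl⟩
    exact ⟨(hg k hk).1, by rw [(hg k hk).2, Real.sin_int_mul_pi]⟩
  · rw [Finset.card_image_of_injOn hinj, Int.card_Icc]
    calc (θ b - θ a) / π - 1 ≤ ((⌊θ b / π⌋ + 1 - ⌈θ a / π⌉ : ℤ) : ℝ) := by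
          push_cast
          linarith [Int.sub_one_lt_floor (θ b / π), Int.ceil_lt_add_one (θ a / π),
            sub_div (θ b) (θ a) π]
      _ ≤ _ := by exact_mod_cast Int.self_le_toNat _

theorem norm_dslope_le_of_mem_sphere {f : ℂ → ℂ} {a z₀ z : ℂ} {r M : ℝ} (hr : 0 < r)
    (hfa : f a = 0) (ha : a ∈ closedBall z₀ r) (hz : z ∈ sphere z₀ (3 * r)) (hM : ‖f z‖ ≤ M) :
    ‖dslope f a z‖ ≤ M / (2 * r) := by
  have hdist : 2 * r ≤ ‖z - a‖ := by
    rw [← dist_eq_norm]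
    linarith [dist_triangle z a z₀, mem_sphere.mp hz, mem_closedBall.mp ha]
  rw [le_div_iff₀ (by positivity)]
  calc ‖dslope f a z‖ * (2 * r) ≤ ‖dslope f a z‖ * ‖z - a‖ := by gcongr
    _ = ‖f z‖ := by rw [← sub_smul_dslope_of_zero hfa z, smul_eq_mul, norm_mul, mul_comm]
    _ ≤ M := hM

theorem norm_mul_two_pow_card_le {f : ℂ → ℂ} (hf : Differentiable ℂ f) {z₀ : ℂ} {r : ℝ}
    (hr : 0 < r) (S : Finset ℂ) (hS : ∀ a ∈ S, a ∈ closedBall z₀ r ∧ f a = 0) {M : ℝ}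
    (hM : ∀ z ∈ sphere z₀ (3 * r), ‖f z‖ ≤ M) :
    ‖f z₀‖ * 2 ^ S.card ≤ M := by
  induction S using Finset.induction_on generalizing f M with
  | empty =>
    simpa using norm_le_of_forall_mem_frontier_norm_le (isBounded_ball (r := 3 * r))
      hf.diffContOnCl (by rwa [frontier_ball z₀ (by positivity)])
      (subset_closure (mem_ball_self (by positivity)))
  | @insert a S ha ih =>
    obtain ⟨haball, hfa⟩ := hS a (Finset.mem_insert_self a S)
    -- dividing out the zero `a` gains a factor `‖z - a‖ ≥ 2r` on the big circle and loses
    -- at most `‖z₀ - a‖ ≤ r` at the centre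
    have hfactor : ∀ z, f z = (z - a) * dslope f a z := fun z =>
      (sub_smul_dslope_of_zero hfa z).symm
    have hg : Differentiable ℂ (dslope f a) := by
      rw [← differentiableOn_univ]
      exact (differentiableOn_dslope Filter.univ_mem).mpr hf.differentiableOn
    have hgS : ∀ b ∈ S, b ∈ closedBall z₀ r ∧ dslope f a b = 0 := by
      intro b hb
      obtain ⟨hbball, hfb⟩ := hS b (Finset.mem_insert_of_mem hb)
      refine ⟨hbball, ?_⟩
      have := hfactor b
      rw [hfb, eq_comm, mul_eq_zero, sub_eq_zero] at this
      exact this.resolve_left (ne_of_mem_of_not_mem hb ha)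
    have hcentre : ‖f z₀‖ ≤ r * ‖dslope f a z₀‖ := by
      rw [hfactor z₀, norm_mul, ← dist_eq_norm, dist_comm]
      gcongr
      exact mem_closedBall.mp haball
    calc ‖f z₀‖ * 2 ^ (insert a S).card ≤ r * ‖dslope f a z₀‖ * 2 ^ (S.card + 1) := by
          rw [Finset.card_insert_of_notMem ha]; gcongr
      _ = 2 * r * (‖dslope f a z₀‖ * 2 ^ S.card) := by ring
      _ ≤ 2 * r * (M / (2 * r)) := by gcongr; exact ih hg hgS fun z hz =>
            norm_dslope_le_of_mem_sphere hr hfa haball hz (hM z hz)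
      _ = M := by field_simp

theorem exists_card_zeros_le_linear {f : ℂ → ℂ} (hf : Differentiable ℂ f) {C τ : ℝ}
    (hτ : 0 ≤ τ) (hfτ : ∀ z, ‖f z‖ ≤ C * Real.exp (τ * ‖z‖)) {z₀ : ℂ} (hz₀ : f z₀ ≠ 0) :
    ∃ A B : ℝ, ∀ r > 0, ∀ S : Finset ℂ, (∀ a ∈ S, a ∈ closedBall z₀ r ∧ f a = 0) →
      (S.card : ℝ) ≤ A + B * r := by
  have hf₀ : 0 < ‖f z₀‖ := norm_pos_iff.mpr hz₀
  have hC : 0 < C := pos_of_mul_pos_left (hf₀.trans_le (hfτ z₀)) (Real.exp_pos _).le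
  refine ⟨(Real.log C + τ * ‖z₀‖ - Real.log ‖f z₀‖) / Real.log 2, 3 * τ / Real.log 2,
    fun r hr S hS => ?_⟩
  have hsphere : ∀ z ∈ sphere z₀ (3 * r), ‖f z‖ ≤ C * Real.exp (τ * (‖z₀‖ + 3 * r)) := by
    intro z hz
    refine (hfτ z).trans ?_
    have : ‖z‖ ≤ ‖z₀‖ + 3 * r := by
      linarith [norm_le_norm_add_norm_sub' z z₀, (mem_sphere_iff_norm.mp hz).le]
    gcongr
  have hlog := Real.log_le_log (by positivity) (norm_mul_two_pow_card_le hf hr S hS hsphere)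
  rw [Real.log_mul hf₀.ne' (by positivity), Real.log_pow,
    Real.log_mul hC.ne' (Real.exp_pos _).ne', Real.log_exp] at hlog
  rw [div_mul_eq_mul_div, ← add_div, le_div_iff₀ (Real.log_pos one_lt_two)]
  linarith

theorem exists_sub_le_linear_of_sin_eq_zero {H : ℂ → ℂ} (hH : Differentiable ℂ H) {C τ : ℝ}
    (hτ : 0 ≤ τ) (hHτ : ∀ z, ‖H z‖ ≤ C * Real.exp (τ * ‖z‖)) {z₀ : ℂ} (hz₀ : H z₀ ≠ 0)
    {θ : ℝ → ℝ} (hθ : Continuous θ) (hzero : ∀ x : ℝ, Real.sin (θ x) = 0 → H x = 0) :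
    ∃ A B : ℝ, ∀ R ≥ 0, θ R - θ (-R) ≤ A + B * R := by
  obtain ⟨A, B, hAB⟩ := exists_card_zeros_le_linear hH hτ hHτ hz₀
  refine ⟨π * (A + B * (‖z₀‖ + 1) + 1), π * B, fun R hR => ?_⟩
  obtain ⟨S, hS, hcard⟩ := exists_finset_sin_eq_zero (neg_le_self hR) hθ.continuousOn
  have hzeros : ∀ a ∈ S.image ((↑) : ℝ → ℂ), a ∈ closedBall z₀ (R + ‖z₀‖ + 1) ∧ H a = 0 := by
    simp only [Finset.mem_image]
    rintro _ ⟨x, hx, rfl⟩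
    obtain ⟨hxR, hsin⟩ := hS x hx
    refine ⟨?_, hzero x hsin⟩
    rw [mem_closedBall, dist_eq_norm]
    calc ‖(x : ℂ) - z₀‖ ≤ |x| + ‖z₀‖ := by simpa using norm_sub_le (x : ℂ) z₀
      _ ≤ R + ‖z₀‖ + 1 := by linarith [abs_le.mpr hxR]
  have hcount := hAB _ (by positivity) _ hzeros
  rw [Finset.card_image_of_injective _ ofReal_injective] at hcount
  have hincr : θ R - θ (-R) ≤ π * (S.card + 1) := (div_le_iff₀' Real.pi_pos).mp (by linarith)
  nlinarith [mul_le_mul_of_nonneg_left hcount Real.pi_pos.le]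

theorem exists_phase_increment_le_linear {E : ℂ → ℂ} (hE : Differentiable ℂ E)
    (hE_ne : ∃ z, conj (E (conj z)) ≠ E z) {C τ : ℝ} (hτ : 0 ≤ τ)
    (htype : ∀ z, ‖E z‖ ≤ C * Real.exp (τ * ‖z‖)) {θ : ℝ → ℝ} (hθ : Continuous θ)
    (hpolar : ∀ x : ℝ, E x = ‖E x‖ * exp (-θ x * I)) :
    ∃ A B : ℝ, ∀ R ≥ 0, θ R - θ (-R) ≤ A + B * R := by
  obtain ⟨z₀, hz₀⟩ := hE_ne
  -- on the real line `E - E#` is `2i Im E = -2i |E| sin θ`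
  refine exists_sub_le_linear_of_sin_eq_zero (H := fun z => E z - conj (E (conj z)))
    (C := 2 * C) (hE.sub fun z => ?_) hτ (fun z => ?_) (sub_ne_zero.mpr hz₀.symm) hθ
    fun x hx => ?_
  · have := (hE (conj z)).conj_conj
    rw [conj_conj] at this
    exact this
  · have hconj := htype (conj z)
    rw [norm_conj] at hconj
    linarith [norm_sub_le (E z) (conj (E (conj z))), norm_conj (E (conj z)), htype z]
  · simp only [conj_ofReal, sub_conj]
    rw [hpolar x]
    simp [← ofReal_neg, exp_ofReal_mul_I_im, hx]

def dyadicShell (n : ℕ) : Set ℝ := Set.Icc (-2 ^ n) (2 ^ n) ∩ {x | 4 ^ n ≤ 8 * (1 + x ^ 2)}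

theorem measurableSet_dyadicShell (n : ℕ) : MeasurableSet (dyadicShell n) :=
  measurableSet_Icc.inter (measurableSet_le measurable_const (by fun_prop))

theorem iUnion_dyadicShell : ⋃ n, dyadicShell n = Set.univ := by
  refine Set.eq_univ_of_forall fun x => Set.mem_iUnion.mpr ?_
  obtain ⟨m, hm1, hm2⟩ := exists_nat_pow_near (le_add_of_nonneg_right (abs_nonneg x)) one_lt_two
  refine ⟨m + 1, abs_le.mp (by linarith [abs_nonneg x]), ?_⟩
  show (4 : ℝ) ^ (m + 1) ≤ 8 * (1 + x ^ 2)
  rw [show (4 : ℝ) ^ (m + 1) = 4 * (2 ^ m) ^ 2 by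
    rw [← pow_mul, pow_succ, mul_comm, show (4 : ℝ) = 2 ^ 2 by norm_num, ← pow_mul,
      mul_comm 2 m]]
  nlinarith [pow_le_pow_left₀ (by positivity) hm1 2, sq_abs x, sq_nonneg (|x| - 1)]

theorem integrableOn_dyadicShell_div_one_add_sq {ψ : ℝ → ℝ} (hψ : LocallyIntegrable ψ)
    (n : ℕ) : IntegrableOn (fun x => ψ x / (1 + x ^ 2)) (dyadicShell n) := by
  simp_rw [div_eq_mul_inv]
  have hw : Continuous fun x : ℝ => (1 + x ^ 2)⁻¹ :=
    (continuous_const.add (continuous_pow 2)).inv₀ fun x =>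
      (by positivity : (0 : ℝ) < 1 + x ^ 2).ne'
  exact ((hψ.integrableOn_isCompact isCompact_Icc).mul_continuousOn hw.continuousOn
    isCompact_Icc).mono_set Set.inter_subset_left

theorem integral_norm_dyadicShell_div_one_add_sq_le {ψ : ℝ → ℝ} (hψ : LocallyIntegrable ψ)
    (hψ0 : 0 ≤ ψ) (n : ℕ) :
    ∫ x in dyadicShell n, ‖ψ x / (1 + x ^ 2)‖ ≤ 8 / 4 ^ n * ∫ x in -2 ^ n..2 ^ n, ψ x := by
  have hψn : IntegrableOn ψ (Set.Icc (-2 ^ n) (2 ^ n)) := hψ.integrableOn_isCompact isCompact_Icc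
  calc ∫ x in dyadicShell n, ‖ψ x / (1 + x ^ 2)‖ ≤ ∫ x in dyadicShell n, 8 / 4 ^ n * ψ x := by
        refine setIntegral_mono_on (integrableOn_dyadicShell_div_one_add_sq hψ n).norm
          ((hψn.mono_set Set.inter_subset_left).const_mul _) (measurableSet_dyadicShell n)
          fun x hx => ?_
        rw [Real.norm_of_nonneg (div_nonneg (hψ0 x) (by positivity)), div_mul_eq_mul_div,
          div_le_div_iff₀ (by positivity) (by positivity)]
        nlinarith [mul_le_mul_of_nonneg_left (show 4 ^ n ≤ 8 * (1 + x ^ 2) from hx.2) (hψ0 x)]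
    _ ≤ 8 / 4 ^ n * ∫ x in -2 ^ n..2 ^ n, ψ x := by
        rw [integral_const_mul, intervalIntegral.integral_of_le
          (by linarith [pow_pos (two_pos (α := ℝ)) n]), ← integral_Icc_eq_integral_Ioc]
        exact mul_le_mul_of_nonneg_left (setIntegral_mono_set hψn
          (Filter.Eventually.of_forall hψ0) Set.inter_subset_left.eventuallyLE) (by positivity)

theorem integrable_div_one_add_sq_of_intervalIntegral_le {ψ : ℝ → ℝ} (hψ : LocallyIntegrable ψ)
    (hψ0 : 0 ≤ ψ) {A B : ℝ} (hAB : ∀ R ≥ 0, ∫ x in -R..R, ψ x ≤ A + B * R) :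
    Integrable fun x => ψ x / (1 + x ^ 2) := by
  have hbound : ∀ n, ∫ x in dyadicShell n, ‖ψ x / (1 + x ^ 2)‖ ≤
      8 * A * (1 / 4) ^ n + 8 * B * (1 / 2) ^ n := fun n => by
    calc _ ≤ 8 / 4 ^ n * ∫ x in -2 ^ n..2 ^ n, ψ x :=
          integral_norm_dyadicShell_div_one_add_sq_le hψ hψ0 n
      _ ≤ 8 / 4 ^ n * (A + B * 2 ^ n) := by gcongr; exact hAB _ (by positivity)
      _ = 8 * A * (1 / 4) ^ n + 8 * B * (1 / 2) ^ n := by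
          rw [one_div_pow, one_div_pow,
            show (4 : ℝ) ^ n = 2 ^ n * 2 ^ n by rw [← mul_pow]; norm_num]
          field_simp
  have hsum : Summable fun n => 8 * A * (1 / 4 : ℝ) ^ n + 8 * B * (1 / 2) ^ n :=
    ((summable_geometric_of_lt_one (by norm_num) (by norm_num)).mul_left _).add
      ((summable_geometric_of_lt_one (by norm_num) (by norm_num)).mul_left _)
  rw [← integrableOn_univ, ← iUnion_dyadicShell]
  exact integrableOn_iUnion_of_summable_integral_norm
    (integrableOn_dyadicShell_div_one_add_sq hψ)
    (hsum.of_nonneg_of_le (fun n => integral_nonneg fun x => norm_nonneg _) hbound)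

theorem deBranges_exponential_type_main_assumption_general (E : ℂ → ℂ) (hE : Differentiable ℂ E)
    (hdB : ∀ z : ℂ, 0 < z.im →
      ‖(starRingEnd ℂ) (E ((starRingEnd ℂ) z))‖ < ‖E z‖)
    (C τ : ℝ) (hτ : 0 < τ)
    (htype : ∀ z : ℂ, ‖E z‖ ≤ C * Real.exp (τ * ‖z‖))
    (hnz : ∀ x : ℝ, E (x : ℂ) ≠ 0) :
    Integrable (fun x : ℝ =>
      deriv (fun y : ℝ => ‖E (x + y * Complex.I)‖ ^ 2) 0
        / ((1 + x ^ 2) * ‖E (x : ℂ)‖ ^ 2)) := by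
  set ψ : ℝ → ℝ := fun x => -(deriv E x / E x).im
  have hE' : Continuous fun x : ℝ => deriv E x :=
    (hE.contDiff.continuous_deriv le_rfl).comp continuous_ofReal
  have hψ : Continuous ψ :=
    (continuous_im.comp (hE'.div (hE.continuous.comp continuous_ofReal) hnz)).neg
  obtain ⟨θ, hθψ, hpolar⟩ :=
    exists_phase_of_ne_zero (fun x => (hE x).hasDerivAt.comp_ofReal) hE' hnz
  have hθ : Continuous θ := continuous_iff_continuousAt.mpr fun x => (hθψ x).continuousAt
  have hE_ne : ∃ z, conj (E (conj z)) ≠ E z := ⟨I, fun h => (hdB I (by simp)).ne (by rw [h])⟩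
  obtain ⟨A, B, hAB⟩ := exists_phase_increment_le_linear hE hE_ne hτ.le htype hθ hpolar
  have hint := integrable_div_one_add_sq_of_intervalIntegral_le hψ.locallyIntegrable
    (fun x => neg_nonneg.mpr (im_deriv_div_nonpos_of_deBranges (hE x) hdB)) fun R hR => by
      rw [intervalIntegral.integral_eq_sub_of_hasDerivAt (fun x _ => hθψ x)
        (hψ.intervalIntegrable _ _)]
      exact hAB R hR
  refine (hint.const_mul 2).congr (Filter.Eventually.of_forall fun x => ?_)
  have hEx : ‖E x‖ ≠ 0 := norm_ne_zero_iff.mpr (hnz x)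
  simp only [deriv_norm_sq_add_mul_I (hE x), ψ]
  field_simp

/-- For a de Branges function `E` of exponential type with no real zeros, the function
`x ↦ (∂_y |E(x+iy)|²|_{y=0}) / ((1 + x²)·|E(x)|²)` is integrable on `ℝ`; this is the main
assumption of the paper, under which quasi-invariance of the determinantal point process
is proved. -/
theorem deBranges_exponential_type_main_assumption (E : ℂ → ℂ) (hE : Differentiable ℂ E)
    (hdB : ∀ z : ℂ, 0 < z.im →
      ‖(starRingEnd ℂ) (E ((starRingEnd ℂ) z))‖ < ‖E z‖)
    (C τ : ℝ) (hC : 0 < C) (hτ : 0 < τ)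
    (htype : ∀ z : ℂ, ‖E z‖ ≤ C * Real.exp (τ * ‖z‖))
    (hnz : ∀ x : ℝ, E (x : ℂ) ≠ 0) :
    Integrable (fun x : ℝ =>
      deriv (fun y : ℝ => ‖E (x + y * Complex.I)‖ ^ 2) 0
        / ((1 + x ^ 2) * ‖E (x : ℂ)‖ ^ 2)) :=
  deBranges_exponential_type_main_assumption_general E hE hdB C τ hτ htype hnz
end
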